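/- Region of influence as the derivative of the integrated activation time (Eq. (A.3)): let (Ω, μ) be a measure space with μ finite, and let a, c : Ω → ℝ be integrable. Define F : ℝ → ℝ by F(s) = ∫_Ω min(s + a(x), c(x)) dμ(x). If s₀ ∈ ℝ satisfies μ({x : s₀ + a(x) = c(x)}) = 0, then F is differentiable at s₀ with derivative μ({x : s₀ + a(x) < c(x)}). -/

import Mathlib

/-!
Each integrand `s ↦ min (s + a x) (c x)` is `1`-Lipschitz, and wherever `s₀ + a x ≠ c x` it
is locally either `s ↦ s + a x` or constant, so its derivative at `s₀` is the indicator of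
`{s₀ + a x < c x}`. The tie set is null, so dominated differentiation under the integral
(with the constant bound `1`, integrable since `μ` is finite) gives `F' s₀ = μ {s₀ + a < c}`.
-/

open MeasureTheory Filter Set

lemma lipschitzWith_min_add_const (a c : ℝ) : LipschitzWith 1 fun s : ℝ => min (s + a) c := by
  simpa using (isometry_add_right a).lipschitz.min (LipschitzWith.const c)

lemma hasDerivAt_min_add_const {s a c : ℝ} (h : s + a ≠ c) :
    HasDerivAt (fun t => min (t + a) c) ({t : ℝ | t + a < c}.indicator (fun _ => 1) s) s := by
  have hcont : Continuous fun t : ℝ => t + a := continuous_add_const a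
  rcases h.lt_or_gt with hlt | hgt
  · have heq : (fun t => min (t + a) c) =ᶠ[nhds s] fun t => t + a := by
      filter_upwards [hcont.continuousAt.preimage_mem_nhds (Iio_mem_nhds hlt)] with t ht
      exact min_eq_left ht.le
    simpa [hlt] using ((hasDerivAt_id s).add_const a).congr_of_eventuallyEq heq
  · have heq : (fun t => min (t + a) c) =ᶠ[nhds s] fun _ => c := by
      filter_upwards [hcont.continuousAt.preimage_mem_nhds (Ioi_mem_nhds hgt)] with t ht
      exact min_eq_right ht.le
    simpa [hgt.not_gt] using (hasDerivAt_const s c).congr_of_eventuallyEq heq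

/-- Region of influence as the derivative of the integrated activation time
(Eq. (A.3)): let `(Ω, μ)` be a measure space with `μ` finite, and let
`a, c : Ω → ℝ` be integrable. Define `F(s) = ∫ min (s + a x) (c x) dμ`. If `s₀`
satisfies `μ {x | s₀ + a x = c x} = 0`, then `F` is differentiable at `s₀` with
derivative `μ {x | s₀ + a x < c x}`. -/
theorem hasDerivAt_integral_min_roi {Ω : Type*} [MeasurableSpace Ω]
    (μ : Measure Ω) [IsFiniteMeasure μ]
    (a c : Ω → ℝ) (ha : Integrable a μ) (hc : Integrable c μ)
    (F : ℝ → ℝ) (hF : ∀ s, F s = ∫ x, min (s + a x) (c x) ∂μ)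
    (s₀ : ℝ) (htie : μ {x | s₀ + a x = c x} = 0) :
    HasDerivAt F (μ {x | s₀ + a x < c x}).toReal s₀ := by
  set S := {x | s₀ + a x < c x}
  have hS : NullMeasurableSet S μ :=
    nullMeasurableSet_lt (aemeasurable_const.add ha.aemeasurable) hc.aemeasurable
  have hint (s : ℝ) : Integrable (fun x => min (s + a x) (c x)) μ :=
    ((integrable_const s).add ha).inf hc
  have hlip : ∀ᵐ x ∂μ, LipschitzOnWith (Real.nnabs 1)
      (fun s => min (s + a x) (c x)) (Metric.ball s₀ 1) :=
    ae_of_all _ fun x => by simpa using (lipschitzWith_min_add_const (a x) (c x)).lipschitzOnWith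
  have hderiv : ∀ᵐ x ∂μ, HasDerivAt (fun s => min (s + a x) (c x)) (S.indicator (fun _ => 1) x) s₀ := by
    filter_upwards [measure_eq_zero_iff_ae_notMem.mp htie] with x hx
    simpa [S, indicator_apply] using hasDerivAt_min_add_const (s := s₀) hx
  have key := hasDerivAt_integral_of_dominated_loc_of_lip (Metric.ball_mem_nhds s₀ one_pos)
    (Eventually.of_forall fun s => (hint s).aestronglyMeasurable) (hint s₀)
    (aestronglyMeasurable_const.indicator₀ hS) hlip (integrable_const 1) hderiv
  rw [funext hF]
  simpa [integral_indicator₀ hS, measureReal_def] using key.2
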